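/- arXiv:1109.0082 — 6 statements merged into one kernel-verified Lean document; each statement's English description precedes it below -/
import Mathlib

section
/- Fix a nonzero complex number ℏ and complex numbers δ, δ′, c, and set Δ(t) = e^t + e^{−t} − c(e^t − e^{−t}) and D(t) = Δ(t)² − (e^t − e^{−t})²·δδ′. Let U ⊆ ℂ be a simply connected open set containing 0 on which D has no zeros, and let g : U → ℂ be the holomorphic function with g(t)² = D(t) and g(0) = 2. Then the function f(t,u,v) = (2/g(t))·exp( (1/(iℏ))·((e^t − e^{−t})/D(t))·( (e^t − e^{−t})(δ′u² + δv²) + 2Δ(t)uv ) ) is holomorphic on U × ℂ², satisfies f(0,u,v) = 1, and solves the K-ordered evolution equation ∂_t f = (c + 2uv/(iℏ))·f + ((c+1)u + δv)·∂_u f + (δ′u + (c−1)v)·∂_v f + (iℏ/2)·( δ(c+1)·∂_u² f + (δδ′ + c² − 1)·∂_u∂_v f + δ′(c−1)·∂_v² f ) on U × ℂ². -/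
/-!
For fixed `t`, `f t` is the Gaussian `K · exp (a u² + b v² + m u v)` with `K = 2 / g t`, so the
evolution operator acts on it as multiplication by the quadratic polynomial `gaussianSymbol`.
In time, `f` has logarithmic derivative `ψ' - D' / (2D)`, where `ψ` is the exponent and
`-D' / (2D)` is the logarithmic derivative of `2 / g` because `g² = D`. The theorem thus reduces
to an identity between rational functions of `S = eᵗ - e⁻ᵗ` and `C = eᵗ + e⁻ᵗ`, which only uses
`S' = C` and `C' = S` (not `C² - S² = 4`).
-/

open Complex Filter Topology

noncomputable def gaussian (K a b m x y : ℂ) : ℂ := K * exp (a * x ^ 2 + b * y ^ 2 + m * x * y)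

section Gaussian

variable (K a b m : ℂ)

lemma gaussian_swap (x y : ℂ) : gaussian K a b m x y = gaussian K b a m y x := by
  unfold gaussian
  ring_nf

lemma hasDerivAt_gaussian_left (x y : ℂ) :
    HasDerivAt (gaussian K a b m · y) ((2 * a * x + m * y) * gaussian K a b m x y) x := by
  have hq : HasDerivAt (fun x => a * x ^ 2 + b * y ^ 2 + m * x * y) (2 * a * x + m * y) x :=
    ((((hasDerivAt_pow 2 x).const_mul a).add_const (b * y ^ 2)).fun_add
      (((hasDerivAt_id x).const_mul m).mul_const y)).congr_deriv (by norm_num; ring)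
  exact (hq.cexp.const_mul K).congr_deriv (by unfold gaussian; ring)

lemma deriv_gaussian_left (y : ℂ) :
    deriv (gaussian K a b m · y) = fun x => (2 * a * x + m * y) * gaussian K a b m x y :=
  funext fun x => (hasDerivAt_gaussian_left K a b m x y).deriv

lemma deriv_gaussian_right (x : ℂ) :
    deriv (gaussian K a b m x ·) = fun y => (2 * b * y + m * x) * gaussian K a b m x y := by
  simp_rw [gaussian_swap K a b m x]
  exact deriv_gaussian_left K b a m x

lemma iteratedDeriv_two_gaussian_left (x y : ℂ) :
    iteratedDeriv 2 (gaussian K a b m · y) x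
      = (2 * a + (2 * a * x + m * y) ^ 2) * gaussian K a b m x y := by
  rw [iteratedDeriv_succ, iteratedDeriv_one, deriv_gaussian_left]
  have hlin : HasDerivAt (fun x => 2 * a * x + m * y) (2 * a) x := by
    simpa using ((hasDerivAt_id x).const_mul (2 * a)).add_const (m * y)
  rw [(hlin.fun_mul (hasDerivAt_gaussian_left K a b m x y)).deriv]
  ring

lemma iteratedDeriv_two_gaussian_right (x y : ℂ) :
    iteratedDeriv 2 (gaussian K a b m x ·) y
      = (2 * b + (2 * b * y + m * x) ^ 2) * gaussian K a b m x y := by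
  simp_rw [gaussian_swap K a b m x]
  exact iteratedDeriv_two_gaussian_left K b a m y x

lemma deriv_deriv_gaussian (x y : ℂ) :
    deriv (fun x => deriv (gaussian K a b m x ·) y) x
      = (m + (2 * b * y + m * x) * (2 * a * x + m * y)) * gaussian K a b m x y := by
  simp_rw [deriv_gaussian_right]
  have hlin : HasDerivAt (fun x => 2 * b * y + m * x) m x := by
    simpa using ((hasDerivAt_id x).const_mul m).const_add (2 * b * y)
  rw [(hlin.fun_mul (hasDerivAt_gaussian_left K a b m x y)).deriv]
  ring

variable (c δ δ' ι : ℂ)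

noncomputable def gaussianSymbol (x y : ℂ) : ℂ :=
  c + 2 * x * y / ι + ((c + 1) * x + δ * y) * (2 * a * x + m * y)
    + (δ' * x + (c - 1) * y) * (2 * b * y + m * x)
    + ι / 2 * (δ * (c + 1) * (2 * a + (2 * a * x + m * y) ^ 2)
      + (δ * δ' + c ^ 2 - 1) * (m + (2 * b * y + m * x) * (2 * a * x + m * y))
      + δ' * (c - 1) * (2 * b + (2 * b * y + m * x) ^ 2))

lemma evolution_operator_gaussian (x y : ℂ) :
    (c + 2 * x * y / ι) * gaussian K a b m x y
      + ((c + 1) * x + δ * y) * deriv (gaussian K a b m · y) x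
      + (δ' * x + (c - 1) * y) * deriv (gaussian K a b m x ·) y
      + ι / 2 * (δ * (c + 1) * iteratedDeriv 2 (gaussian K a b m · y) x
        + (δ * δ' + c ^ 2 - 1) * deriv (fun x => deriv (gaussian K a b m x ·) y) x
        + δ' * (c - 1) * iteratedDeriv 2 (gaussian K a b m x ·) y)
      = gaussian K a b m x y * gaussianSymbol a b m c δ δ' ι x y := by
  rw [deriv_deriv_gaussian, deriv_gaussian_left, deriv_gaussian_right,
    iteratedDeriv_two_gaussian_left, iteratedDeriv_two_gaussian_right, gaussianSymbol]
  ring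

end Gaussian

lemma DifferentiableAt.hasDerivAt_of_sq_eventuallyEq {𝕜 : Type*} [NontriviallyNormedField 𝕜]
    [CharZero 𝕜] {g D : 𝕜 → 𝕜} {t D' : 𝕜} (hg : DifferentiableAt 𝕜 g t)
    (hsq : (fun s => g s ^ 2) =ᶠ[𝓝 t] D) (hD : HasDerivAt D D' t) (hDt : D t ≠ 0) :
    HasDerivAt g (g t * D' / (2 * D t)) t := by
  have hgt : g t ^ 2 = D t := hsq.eq_of_nhds
  have hg0 : g t ≠ 0 := fun h => hDt (by rw [← hgt, h]; ring)
  have hchain : 2 * g t * deriv g t = D' := by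
    rw [← ((hg.hasDerivAt.pow 2).congr_of_eventuallyEq hsq.symm).unique hD]
    push_cast
    ring
  refine hg.hasDerivAt.congr_deriv ?_
  rw [← hgt, ← hchain]
  field_simp

lemma hasDerivAt_two_div_mul_exp {g D ψ : ℂ → ℂ} {t D' ψ' : ℂ} (hg : DifferentiableAt ℂ g t)
    (hsq : (fun s => g s ^ 2) =ᶠ[𝓝 t] D) (hD : HasDerivAt D D' t) (hDt : D t ≠ 0)
    (hψ : HasDerivAt ψ ψ' t) :
    HasDerivAt (fun s => 2 / g s * exp (ψ s)) (2 / g t * exp (ψ t) * (ψ' - D' / (2 * D t))) t := by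
  have hgt : g t ≠ 0 := fun h => hDt (by rw [← hsq.eq_of_nhds, h]; ring)
  refine (((hasDerivAt_const t (2 : ℂ)).fun_div (hg.hasDerivAt_of_sq_eventuallyEq hsq hD hDt)
    hgt).fun_mul hψ.cexp).congr_deriv ?_
  field_simp
  ring

lemma hasDerivAt_exp_sub_exp_neg (t : ℂ) :
    HasDerivAt (fun s => exp s - exp (-s)) (exp t + exp (-t)) t :=
  ((hasDerivAt_exp t).fun_sub (hasDerivAt_neg t).cexp).congr_deriv (by ring)

lemma hasDerivAt_exp_add_exp_neg (t : ℂ) :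
    HasDerivAt (fun s => exp s + exp (-s)) (exp t - exp (-t)) t :=
  ((hasDerivAt_exp t).fun_add (hasDerivAt_neg t).cexp).congr_deriv (by ring)

section Coefficients

variable {c δ δ' : ℂ} {Δ D : ℂ → ℂ}

lemma hasDerivAt_of_eq_exp_add_exp_neg_sub_mul
    (hΔ : ∀ t, Δ t = exp t + exp (-t) - c * (exp t - exp (-t))) (t : ℂ) :
    HasDerivAt Δ (exp t - exp (-t) - c * (exp t + exp (-t))) t :=
  funext hΔ ▸ (hasDerivAt_exp_add_exp_neg t).fun_sub ((hasDerivAt_exp_sub_exp_neg t).const_mul c)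

lemma hasDerivAt_discriminant (hΔ : ∀ t, Δ t = exp t + exp (-t) - c * (exp t - exp (-t)))
    (hD : ∀ t, D t = Δ t ^ 2 - (exp t - exp (-t)) ^ 2 * (δ * δ')) (t : ℂ) :
    HasDerivAt D
      (2 * (exp t + exp (-t) - c * (exp t - exp (-t))) * (exp t - exp (-t) - c * (exp t + exp (-t)))
        - 2 * (exp t - exp (-t)) * (exp t + exp (-t)) * (δ * δ')) t := by
  rw [funext hD]
  exact (((hasDerivAt_of_eq_exp_add_exp_neg_sub_mul hΔ t).pow 2).fun_sub
    (((hasDerivAt_exp_sub_exp_neg t).pow 2).mul_const _)).congr_deriv (by rw [hΔ]; push_cast; ring)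

lemma hasDerivAt_exponent (hΔ : ∀ t, Δ t = exp t + exp (-t) - c * (exp t - exp (-t)))
    (hD : ∀ t, D t = Δ t ^ 2 - (exp t - exp (-t)) ^ 2 * (δ * δ')) {t : ℂ} (hDt : D t ≠ 0)
    (ι u v : ℂ) :
    HasDerivAt (fun s => 1 / ι * ((exp s - exp (-s)) / D s)
        * ((exp s - exp (-s)) * (δ' * u ^ 2 + δ * v ^ 2) + 2 * Δ s * u * v))
      (1 / ι * ((exp t + exp (-t)) * D t - (exp t - exp (-t))
          * (2 * (exp t + exp (-t) - c * (exp t - exp (-t)))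
              * (exp t - exp (-t) - c * (exp t + exp (-t)))
            - 2 * (exp t - exp (-t)) * (exp t + exp (-t)) * (δ * δ'))) / D t ^ 2
          * ((exp t - exp (-t)) * (δ' * u ^ 2 + δ * v ^ 2)
            + 2 * (exp t + exp (-t) - c * (exp t - exp (-t))) * u * v)
        + 1 / ι * ((exp t - exp (-t)) / D t) * ((exp t + exp (-t)) * (δ' * u ^ 2 + δ * v ^ 2)
            + 2 * (exp t - exp (-t) - c * (exp t + exp (-t))) * u * v)) t := by
  have hS := hasDerivAt_exp_sub_exp_neg t
  have hΔ' := hasDerivAt_of_eq_exp_add_exp_neg_sub_mul hΔ t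
  refine (((hS.fun_div (hasDerivAt_discriminant hΔ hD t) hDt).const_mul (1 / ι)).fun_mul
    ((hS.mul_const _).fun_add (((hΔ'.const_mul 2).mul_const u).mul_const v))).congr_deriv ?_
  rw [hΔ]
  ring

end Coefficients

lemma timeLogDeriv_eq_gaussianSymbol {ι S C c δ δ' u v D a b m : ℂ} (hι : ι ≠ 0) (hD0 : D ≠ 0)
    (hD : D = (C - c * S) ^ 2 - S ^ 2 * (δ * δ')) (ha : a = S ^ 2 * δ' / (ι * D))
    (hb : b = S ^ 2 * δ / (ι * D)) (hm : m = 2 * S * (C - c * S) / (ι * D)) :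
    1 / ι * ((C * D - S * (2 * (C - c * S) * (S - c * C) - 2 * S * C * (δ * δ'))) / D ^ 2
          * (S * (δ' * u ^ 2 + δ * v ^ 2) + 2 * (C - c * S) * u * v)
        + S / D * (C * (δ' * u ^ 2 + δ * v ^ 2) + 2 * (S - c * C) * u * v))
      - (2 * (C - c * S) * (S - c * C) - 2 * S * C * (δ * δ')) / (2 * D)
      = gaussianSymbol a b m c δ δ' ι u v := by
  subst ha hb hm
  unfold gaussianSymbol
  field_simp
  subst hD
  ring

theorem statement1_general (ℏ δ δ' c : ℂ) (hℏ : ℏ ≠ 0)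
    (Δ D : ℂ → ℂ)
    (hΔ : ∀ t, Δ t = exp t + exp (-t) - c * (exp t - exp (-t)))
    (hD : ∀ t, D t = (Δ t) ^ 2 - (exp t - exp (-t)) ^ 2 * (δ * δ'))
    (U : Set ℂ) (hUopen : IsOpen U)
    (hDne : ∀ t ∈ U, D t ≠ 0)
    (g : ℂ → ℂ) (hg : DifferentiableOn ℂ g U)
    (hg2 : ∀ t ∈ U, (g t) ^ 2 = D t) (hg0 : g 0 = 2)
    (f : ℂ → ℂ → ℂ → ℂ)
    (hf : ∀ t u v, f t u v =
      2 / g t * exp ((1 / (Complex.I * ℏ)) * ((exp t - exp (-t)) / D t) *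
        ((exp t - exp (-t)) * (δ' * u ^ 2 + δ * v ^ 2) + 2 * Δ t * u * v))) :
    DifferentiableOn ℂ (fun p : ℂ × ℂ × ℂ => f p.1 p.2.1 p.2.2) {p | p.1 ∈ U} ∧
    (∀ u v : ℂ, f 0 u v = 1) ∧
    (∀ t ∈ U, ∀ u v : ℂ,
      HasDerivAt (fun s => f s u v)
        ((c + 2 * u * v / (Complex.I * ℏ)) * f t u v
          + ((c + 1) * u + δ * v) * deriv (fun x => f t x v) u
          + (δ' * u + (c - 1) * v) * deriv (fun y => f t u y) v
          + (Complex.I * ℏ / 2) *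
            (δ * (c + 1) * iteratedDeriv 2 (fun x => f t x v) u
              + (δ * δ' + c ^ 2 - 1) * deriv (fun x => deriv (fun y => f t x y) v) u
              + δ' * (c - 1) * iteratedDeriv 2 (fun y => f t u y) v)) t) := by
  have hι : I * ℏ ≠ 0 := mul_ne_zero I_ne_zero hℏ
  have hgne : ∀ t ∈ U, g t ≠ 0 := fun t ht h0 => hDne t ht (by rw [← hg2 t ht, h0]; ring)
  have hgdiff : ∀ t ∈ U, DifferentiableAt ℂ g t :=
    fun t ht => hg.differentiableAt (hUopen.mem_nhds ht)
  refine ⟨?_, fun u v => by rw [hf]; norm_num [hg0], fun t ht u v => ?_⟩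
  · have hΔdiff : Differentiable ℂ Δ := by rw [funext hΔ]; fun_prop
    have hDdiff : Differentiable ℂ D := by rw [funext hD]; fun_prop
    rintro ⟨t, u, v⟩ (ht : t ∈ U)
    have hgt := hgdiff t ht
    have hgt0 := hgne t ht
    have hDt := hDne t ht
    simp only [hf]
    exact DifferentiableAt.differentiableWithinAt (by fun_prop (disch := assumption))
  have hDt := hDne t ht
  obtain ⟨a, ha⟩ : ∃ a, a = (exp t - exp (-t)) ^ 2 * δ' / (I * ℏ * D t) := ⟨_, rfl⟩
  obtain ⟨b, hb⟩ : ∃ b, b = (exp t - exp (-t)) ^ 2 * δ / (I * ℏ * D t) := ⟨_, rfl⟩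
  obtain ⟨m, hm⟩ : ∃ m, m = 2 * (exp t - exp (-t)) * (exp t + exp (-t) - c * (exp t - exp (-t)))
      / (I * ℏ * D t) := ⟨_, rfl⟩
  have hft : ∀ x y, f t x y = gaussian (2 / g t) a b m x y := by
    intro x y
    rw [hf, gaussian, hΔ, ha, hb, hm]
    congr 2
    field_simp
  have hsq : (fun s => g s ^ 2) =ᶠ[𝓝 t] D :=
    eventually_of_mem (hUopen.mem_nhds ht) fun s hs => hg2 s hs
  rw [show (fun s => f s u v) = _ from funext fun s => hf s u v]
  refine (hasDerivAt_two_div_mul_exp (hgdiff t ht) hsq (hasDerivAt_discriminant hΔ hD t) hDt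
    (hasDerivAt_exponent hΔ hD hDt (I * ℏ) u v)).congr_deriv ?_
  simp only [← hf t u v, hft, evolution_operator_gaussian]
  rw [← timeLogDeriv_eq_gaussianSymbol hι hDt (by rw [hD, hΔ]) ha hb hm]
  ring

/-- Fix `ℏ ≠ 0` and `δ, δ', c ∈ ℂ`, with `Δ(t) = e^t + e^{−t} − c(e^t − e^{−t})` and
`D(t) = Δ(t)² − (e^t − e^{−t})²·δδ'`.  Let `U ⊆ ℂ` be a simply connected open set containing
`0` on which `D` has no zeros, and `g` the holomorphic square root of `D` on `U` with
`g 0 = 2`.  Then the `K`-ordered expression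
`f(t,u,v) = (2/g(t))·exp((1/(iℏ))·((e^t−e^{−t})/D(t))·((e^t−e^{−t})(δ'u²+δv²)+2Δ(t)uv))`
of the ∗-exponential `e_∗^{t(2/(iℏ))u∘v}` is holomorphic on `U × ℂ²`, equals `1` at `t = 0`,
and solves the `K`-ordered evolution equation. -/
theorem statement1 (ℏ δ δ' c : ℂ) (hℏ : ℏ ≠ 0)
    (Δ D : ℂ → ℂ)
    (hΔ : ∀ t, Δ t = exp t + exp (-t) - c * (exp t - exp (-t)))
    (hD : ∀ t, D t = (Δ t) ^ 2 - (exp t - exp (-t)) ^ 2 * (δ * δ'))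
    (U : Set ℂ) (hUopen : IsOpen U) (hUsc : SimplyConnectedSpace U) (hU0 : (0 : ℂ) ∈ U)
    (hDne : ∀ t ∈ U, D t ≠ 0)
    (g : ℂ → ℂ) (hg : DifferentiableOn ℂ g U)
    (hg2 : ∀ t ∈ U, (g t) ^ 2 = D t) (hg0 : g 0 = 2)
    (f : ℂ → ℂ → ℂ → ℂ)
    (hf : ∀ t u v, f t u v =
      2 / g t * exp ((1 / (Complex.I * ℏ)) * ((exp t - exp (-t)) / D t) *
        ((exp t - exp (-t)) * (δ' * u ^ 2 + δ * v ^ 2) + 2 * Δ t * u * v))) :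
    DifferentiableOn ℂ (fun p : ℂ × ℂ × ℂ => f p.1 p.2.1 p.2.2) {p | p.1 ∈ U} ∧
    (∀ u v : ℂ, f 0 u v = 1) ∧
    (∀ t ∈ U, ∀ u v : ℂ,
      HasDerivAt (fun s => f s u v)
        ((c + 2 * u * v / (Complex.I * ℏ)) * f t u v
          + ((c + 1) * u + δ * v) * deriv (fun x => f t x v) u
          + (δ' * u + (c - 1) * v) * deriv (fun y => f t u y) v
          + (Complex.I * ℏ / 2) *
            (δ * (c + 1) * iteratedDeriv 2 (fun x => f t x v) u
              + (δ * δ' + c ^ 2 - 1) * deriv (fun x => deriv (fun y => f t x y) v) u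
              + δ' * (c - 1) * iteratedDeriv 2 (fun y => f t u y) v)) t) :=
  statement1_general ℏ δ δ' c hℏ Δ D hΔ hD U hUopen hDne g hg hg2 hg0 f hf
end

section
/- Fix a nonzero complex number ℏ and c ∈ ℂ with c ∉ {1, −1}, and set Δ(t) = e^t + e^{−t} − c(e^t − e^{−t}). On the open set {t ∈ ℂ : Δ(t) ≠ 0}, the function f(t,u,v) = (2/Δ(t))·exp( (2(e^t − e^{−t})uv)/(iℏ·Δ(t)) ) satisfies f(0,u,v) = 1 and solves ∂_t f = (c + 2uv/(iℏ))·f + (c+1)u·∂_u f + (c−1)v·∂_v f + (iℏ/2)(c² − 1)·∂_u∂_v f. Moreover Δ(t) = 0 if and only if e^{2t} = (c+1)/(c−1); hence the singular points of f form a πi-periodic set lying on the single vertical line Re t = ½·log|(c+1)/(c−1)|, and they are poles rather than branch points. -/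
/-!
`f` is a Gaussian `a(t) e^{b(t) u v}` with `a = 2/Δ` and `b = 2(e^t − e^{−t})/(iℏΔ)`. For such
Gaussians the evolution equation reduces to the Riccati system
`a' = (c + (iℏ/2)(c² − 1) b) a`, `b' = 2/(iℏ) + 2cb + (iℏ/2)(c² − 1) b²`, which these
coefficients satisfy because `Δ' = −(cΔ + (c² − 1)(e^t − e^{−t}))` and
`(e^t + e^{−t})² − (e^t − e^{−t})² = 4`. The zeros of `Δ` are located by
`e^t Δ(t) = (1 − c) e^{2t} + (1 + c)` and `e^{πi} = −1`.
-/

open Complex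

namespace KOrdered

section Gaussian

variable (a b : ℂ)

theorem hasDerivAt_mul_exp_mul_mul_left (x y : ℂ) :
    HasDerivAt (fun x => a * exp (b * x * y)) (b * y * (a * exp (b * x * y))) x :=
  ((((hasDerivAt_id' x).const_mul b).mul_const y).cexp.const_mul a).congr_deriv (by ring)

theorem hasDerivAt_mul_exp_mul_mul_right (x y : ℂ) :
    HasDerivAt (fun y => a * exp (b * x * y)) (b * x * (a * exp (b * x * y))) y :=
  (((hasDerivAt_id' y).const_mul (b * x)).cexp.const_mul a).congr_deriv (by ring)

theorem deriv_deriv_mul_exp_mul_mul (u v : ℂ) :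
    deriv (fun x => deriv (fun y => a * exp (b * x * y)) v) u =
      (b + b ^ 2 * u * v) * (a * exp (b * u * v)) := by
  have inner : (fun x => deriv (fun y => a * exp (b * x * y)) v) =
      fun x => b * x * (a * exp (b * x * v)) :=
    funext fun x => (hasDerivAt_mul_exp_mul_mul_right a b x v).deriv
  rw [inner, (((hasDerivAt_id' u).const_mul b).fun_mul (hasDerivAt_mul_exp_mul_mul_left a b u v)).deriv]
  ring

end Gaussian

/-- After division by the Gaussian both sides are affine in `u v`; the two hypotheses match
their coefficients. -/
theorem hasDerivAt_mul_exp_mul_mul_of_riccati {a b : ℂ → ℂ} {h c t : ℂ}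
    (ha : HasDerivAt a ((c + h / 2 * (c ^ 2 - 1) * b t) * a t) t)
    (hb : HasDerivAt b (2 / h + 2 * c * b t + h / 2 * (c ^ 2 - 1) * b t ^ 2) t) (u v : ℂ) :
    HasDerivAt (fun s => a s * exp (b s * u * v))
      ((c + 2 * u * v / h) * (a t * exp (b t * u * v))
        + (c + 1) * u * deriv (fun x => a t * exp (b t * x * v)) u
        + (c - 1) * v * deriv (fun y => a t * exp (b t * u * y)) v
        + h / 2 * (c ^ 2 - 1) * deriv (fun x => deriv (fun y => a t * exp (b t * x * y)) v) u) t := by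
  rw [(hasDerivAt_mul_exp_mul_mul_left _ _ u v).deriv,
    (hasDerivAt_mul_exp_mul_mul_right _ _ u v).deriv, deriv_deriv_mul_exp_mul_mul]
  exact (ha.fun_mul ((hb.mul_const u).mul_const v).cexp).congr_deriv (by ring)

noncomputable def delta (c t : ℂ) : ℂ := exp t + exp (-t) - c * (exp t - exp (-t))

/-- The exponent rate `b(t)` of the Gaussian, with `h` standing for `iℏ`. -/
noncomputable def rate (h c t : ℂ) : ℂ := 2 * (exp t - exp (-t)) / (h * delta c t)

theorem hasDerivAt_exp_neg (t : ℂ) : HasDerivAt (fun s => exp (-s)) (-exp (-t)) t :=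
  (hasDerivAt_id' t).fun_neg.cexp.congr_deriv (by ring)

theorem hasDerivAt_exp_sub_exp_neg (t : ℂ) :
    HasDerivAt (fun s => exp s - exp (-s)) (exp t + exp (-t)) t :=
  ((hasDerivAt_exp t).sub (hasDerivAt_exp_neg t)).congr_deriv (by ring)

theorem hasDerivAt_delta (c t : ℂ) :
    HasDerivAt (delta c) (exp t - exp (-t) - c * (exp t + exp (-t))) t :=
  (((hasDerivAt_exp t).add (hasDerivAt_exp_neg t)).sub
    ((hasDerivAt_exp_sub_exp_neg t).const_mul c)).congr_deriv (by ring)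

theorem delta_zero (c : ℂ) : delta c 0 = 2 := by
  norm_num [delta]

theorem delta_add_pi_mul_I (c t : ℂ) : delta c (t + Real.pi * I) = -delta c t := by
  have hexp : exp (t + Real.pi * I) = -exp t := by rw [exp_add, exp_pi_mul_I, mul_neg_one]
  have hexp_neg : exp (-(t + Real.pi * I)) = -exp (-t) := by
    rw [neg_add, exp_add, exp_neg (Real.pi * I), exp_pi_mul_I, inv_neg, inv_one, mul_neg_one]
  rw [delta, delta, hexp, hexp_neg]
  ring

theorem delta_eq_zero_iff {c : ℂ} (hc : c ≠ 1) (t : ℂ) :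
    delta c t = 0 ↔ exp (2 * t) = (c + 1) / (c - 1) := by
  have hinv : exp t * exp (-t) = 1 := by rw [← exp_add, add_neg_cancel, exp_zero]
  have hmul : exp t * delta c t = (1 - c) * exp (2 * t) + (1 + c) := by
    rw [delta, two_mul, exp_add]
    linear_combination (1 + c) * hinv
  rw [eq_div_iff (sub_ne_zero.mpr hc), ← mul_right_inj' (exp_ne_zero t), hmul, mul_zero]
  constructor <;> intro h <;> linear_combination -h

theorem re_eq_of_delta_eq_zero {c t : ℂ} (hc : c ≠ 1) (ht : delta c t = 0) :
    t.re = Real.log ‖(c + 1) / (c - 1)‖ / 2 := by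
  rw [← (delta_eq_zero_iff hc t).mp ht, norm_exp, Real.log_exp]
  simp

theorem hasDerivAt_two_div_delta {h c t : ℂ} (hh : h ≠ 0) (ht : delta c t ≠ 0) :
    HasDerivAt (fun s => 2 / delta c s)
      ((c + h / 2 * (c ^ 2 - 1) * rate h c t) * (2 / delta c t)) t := by
  refine ((hasDerivAt_const t 2).div (hasDerivAt_delta c t) ht).congr_deriv ?_
  simp only [rate, delta] at ht ⊢
  field_simp
  ring

theorem hasDerivAt_rate {h c t : ℂ} (hh : h ≠ 0) (ht : delta c t ≠ 0) :
    HasDerivAt (rate h c)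
      (2 / h + 2 * c * rate h c t + h / 2 * (c ^ 2 - 1) * rate h c t ^ 2) t := by
  refine (((hasDerivAt_exp_sub_exp_neg t).const_mul 2).div ((hasDerivAt_delta c t).const_mul h)
    (mul_ne_zero hh ht)).congr_deriv ?_
  simp only [rate, delta] at ht ⊢
  field_simp
  ring

end KOrdered

open KOrdered

theorem statement3_general (ℏ c : ℂ) (hℏ : ℏ ≠ 0) (hc1 : c ≠ 1)
    (Δ : ℂ → ℂ)
    (hΔ : ∀ t, Δ t = exp t + exp (-t) - c * (exp t - exp (-t)))
    (f : ℂ → ℂ → ℂ → ℂ)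
    (hf : ∀ t u v, f t u v =
      2 / Δ t * exp (2 * (exp t - exp (-t)) * u * v / (Complex.I * ℏ * Δ t))) :
    (∀ u v : ℂ, f 0 u v = 1) ∧
    (∀ t : ℂ, Δ t ≠ 0 → ∀ u v : ℂ,
      HasDerivAt (fun s => f s u v)
        ((c + 2 * u * v / (Complex.I * ℏ)) * f t u v
          + (c + 1) * u * deriv (fun x => f t x v) u
          + (c - 1) * v * deriv (fun y => f t u y) v
          + (Complex.I * ℏ / 2) * (c ^ 2 - 1) *
              deriv (fun x => deriv (fun y => f t x y) v) u) t) ∧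
    (∀ t : ℂ, Δ t = 0 ↔ exp (2 * t) = (c + 1) / (c - 1)) ∧
    (∀ t : ℂ, Δ t = 0 → Δ (t + Real.pi * Complex.I) = 0) ∧
    (∀ t : ℂ, Δ t = 0 → t.re = Real.log (‖(c + 1) / (c - 1)‖) / 2) ∧
    (∀ u v : ℂ, DifferentiableOn ℂ (fun t => f t u v) {t | Δ t ≠ 0}) := by
  obtain rfl : Δ = delta c := funext hΔ
  have hf_gaussian : ∀ t u v, f t u v = 2 / delta c t * exp (rate (I * ℏ) c t * u * v) := by
    intro t u v
    rw [hf, rate]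
    ring_nf
  have hIℏ : I * ℏ ≠ 0 := mul_ne_zero I_ne_zero hℏ
  have hpde : ∀ t, delta c t ≠ 0 → ∀ u v, HasDerivAt (fun s => f s u v)
        ((c + 2 * u * v / (I * ℏ)) * f t u v
          + (c + 1) * u * deriv (fun x => f t x v) u
          + (c - 1) * v * deriv (fun y => f t u y) v
          + (I * ℏ / 2) * (c ^ 2 - 1) * deriv (fun x => deriv (fun y => f t x y) v) u) t := by
    intro t ht u v
    simp only [hf_gaussian]
    exact hasDerivAt_mul_exp_mul_mul_of_riccati (hasDerivAt_two_div_delta hIℏ ht)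
      (hasDerivAt_rate hIℏ ht) u v
  refine ⟨fun u v => by simp [hf_gaussian, delta_zero, rate], hpde, delta_eq_zero_iff hc1,
    fun t ht => by rw [delta_add_pi_mul_I, ht, neg_zero], fun t => re_eq_of_delta_eq_zero hc1,
    fun u v t ht => (hpde t ht u v).differentiableAt.differentiableWithinAt⟩

/-- Fix `ℏ ≠ 0` and `c ∉ {1, −1}`, and set `Δ(t) = e^t + e^{−t} − c(e^t − e^{−t})`.
On `{Δ ≠ 0}` the function `f(t,u,v) = (2/Δ(t))·exp(2(e^t−e^{−t})uv/(iℏΔ(t)))` (the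
`K`-ordered expression of `e_∗^{t(2/(iℏ))u∘v}` for `K = [[0,c],[c,0]]`) satisfies
`f(0,u,v) = 1` and the evolution equation; moreover `Δ(t) = 0 ↔ e^{2t} = (c+1)/(c−1)`,
so the singular set is `πi`-periodic and lies on the single vertical line
`Re t = ½ log|(c+1)/(c−1)|`, and away from it `f` is single-valued holomorphic
(poles rather than branch points). -/
theorem statement3 (ℏ c : ℂ) (hℏ : ℏ ≠ 0) (hc1 : c ≠ 1) (hc2 : c ≠ -1)
    (Δ : ℂ → ℂ)
    (hΔ : ∀ t, Δ t = exp t + exp (-t) - c * (exp t - exp (-t)))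
    (f : ℂ → ℂ → ℂ → ℂ)
    (hf : ∀ t u v, f t u v =
      2 / Δ t * exp (2 * (exp t - exp (-t)) * u * v / (Complex.I * ℏ * Δ t))) :
    (∀ u v : ℂ, f 0 u v = 1) ∧
    (∀ t : ℂ, Δ t ≠ 0 → ∀ u v : ℂ,
      HasDerivAt (fun s => f s u v)
        ((c + 2 * u * v / (Complex.I * ℏ)) * f t u v
          + (c + 1) * u * deriv (fun x => f t x v) u
          + (c - 1) * v * deriv (fun y => f t u y) v
          + (Complex.I * ℏ / 2) * (c ^ 2 - 1) *
              deriv (fun x => deriv (fun y => f t x y) v) u) t) ∧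
    (∀ t : ℂ, Δ t = 0 ↔ exp (2 * t) = (c + 1) / (c - 1)) ∧
    (∀ t : ℂ, Δ t = 0 → Δ (t + Real.pi * Complex.I) = 0) ∧
    (∀ t : ℂ, Δ t = 0 → t.re = Real.log (‖(c + 1) / (c - 1)‖) / 2) ∧
    (∀ u v : ℂ, DifferentiableOn ℂ (fun t => f t u v) {t | Δ t ≠ 0}) :=
  statement3_general ℏ c hℏ hc1 Δ hΔ f hf
end

section
/- Fix a nonzero complex number ℏ and complex numbers δ, δ′, c with (1+c)² ≠ δδ′ and (1−c)² ≠ δδ′, set Δ(t) = e^t + e^{−t} − c(e^t − e^{−t}) and D(t) = Δ(t)² − (e^t − e^{−t})²·δδ′, and assume D(s) ≠ 0 for every real s. Let g : ℝ → ℂ be the continuous function with g(s)² = D(s) and g(0) = 2, and define G(t,u,v) = (2/g(t/2))·exp( (1/(iℏ))·((e^{t/2} − e^{−t/2})/D(t/2))·( (e^{t/2} − e^{−t/2})(δ′u² + δv²) + 2Δ(t/2)uv ) ). Then the limit w̄ = lim_{s→+∞} e^{−s} g(s) exists and satisfies w̄² = (1−c)² − δδ′, and, uniformly on compact subsets of ℂ²,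 lim_{t→+∞} e^{t/2} G(t,u,v) = (2/w̄)·exp( (1/(iℏ))·(δ′u² + 2(1−c)uv + δv²)/((1−c)² − δδ′) ) and lim_{t→−∞} e^{t/2} G(t,u,v) = 0. -/
/-!
Write `ε = e^{-s}`. Then `e^{-2s} D(s)` and the two coefficients `E²/D`, `2EΔ/D` of the exponent
(`E = e^s - e^{-s}`) are rational functions of `ε`, regular at `ε = 0` because
`(1 - c)² ≠ δδ'`; the reflection `s ↦ -s` exchanges `c` and `-c`, so the behaviour at `-∞`
follows from that at `+∞` under `(1 + c)² ≠ δδ'`. The continuous function `e^{-s} g(s)` has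
square `e^{-2s} D(s)`, which tends to `(1 - c)² - δδ' ≠ 0`; far out it therefore stays close to
one of the two square roots, and connectedness of `[T, ∞)` forbids it from switching roots.
At `-∞` the prefactor `e^{s}·2/g(s)` has square `4 e^{2s}/D(s) → 0`. Finally `e^{t/2} G(t,u,v)` is
a jointly continuous function of `(u, v)` and of three convergent parameters, which makes the
convergence uniform on compact sets.
-/

open Complex Filter Topology

namespace Complex

lemma two_mul_norm_le_norm_sub_add_norm_add (z r : ℂ) : 2 * ‖r‖ ≤ ‖z - r‖ + ‖z + r‖ := by
  calc 2 * ‖r‖ = ‖(z + r) - (z - r)‖ := by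
        rw [show (z + r) - (z - r) = 2 * r by ring, norm_mul, Complex.norm_two]
    _ ≤ ‖z - r‖ + ‖z + r‖ := (norm_sub_le _ _).trans_eq (add_comm ..)

lemma norm_sub_mul_norm_le_norm_sq_sub_sq {z r : ℂ} (h : ‖z - r‖ < ‖r‖) :
    ‖z - r‖ * ‖r‖ ≤ ‖z ^ 2 - r ^ 2‖ := by
  have hr : ‖r‖ ≤ ‖z + r‖ := by linarith [two_mul_norm_le_norm_sub_add_norm_add z r]
  calc ‖z - r‖ * ‖r‖ ≤ ‖z - r‖ * ‖z + r‖ := by gcongr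
    _ = ‖z ^ 2 - r ^ 2‖ := by rw [← norm_mul]; ring_nf

lemma norm_sub_lt_or_norm_add_lt_of_norm_sq_sub_sq_lt {z r : ℂ}
    (h : ‖z ^ 2 - r ^ 2‖ < ‖r‖ ^ 2) : ‖z - r‖ < ‖r‖ ∨ ‖z + r‖ < ‖r‖ := by
  by_contra! hge
  have hfac : ‖z ^ 2 - r ^ 2‖ = ‖z - r‖ * ‖z + r‖ := by rw [← norm_mul]; ring_nf
  nlinarith [mul_le_mul hge.1 hge.2 (norm_nonneg r) (norm_nonneg (z - r))]

lemma tendsto_of_tendsto_sq_of_eventually_norm_sub_lt {α : Type*} {l : Filter α} {h : α → ℂ}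
    {r : ℂ} (hr : r ≠ 0) (hsq : Tendsto (fun x => h x ^ 2) l (𝓝 (r ^ 2)))
    (hnear : ∀ᶠ x in l, ‖h x - r‖ < ‖r‖) : Tendsto h l (𝓝 r) := by
  rw [tendsto_iff_norm_sub_tendsto_zero]
  have hbound : Tendsto (fun x => ‖h x ^ 2 - r ^ 2‖ / ‖r‖) l (𝓝 0) := by
    simpa using (tendsto_iff_norm_sub_tendsto_zero.1 hsq).div_const ‖r‖
  refine squeeze_zero' (Eventually.of_forall fun _ => norm_nonneg _) ?_ hbound
  filter_upwards [hnear] with x hx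
  rw [le_div_iff₀ (norm_pos_iff.2 hr)]
  exact norm_sub_mul_norm_le_norm_sq_sub_sq hx

theorem _root_.Continuous.exists_tendsto_atTop_of_tendsto_sq {h : ℝ → ℂ} (hc : Continuous h)
    {L : ℂ} (hL : L ≠ 0) (hsq : Tendsto (fun s => h s ^ 2) atTop (𝓝 L)) :
    ∃ w, w ^ 2 = L ∧ Tendsto h atTop (𝓝 w) := by
  obtain ⟨r, rfl⟩ := IsAlgClosed.exists_pow_nat_eq L two_pos
  have hr : r ≠ 0 := by rintro rfl; simp at hL
  have of_subset : ∀ ρ : ℂ, ρ ^ 2 = r ^ 2 → ∀ T, Set.Ici T ⊆ {s | ‖h s - ρ‖ < ‖ρ‖} →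
      ∃ w, w ^ 2 = r ^ 2 ∧ Tendsto h atTop (𝓝 w) := fun ρ hρ T hT =>
    ⟨ρ, hρ, tendsto_of_tendsto_sq_of_eventually_norm_sub_lt
      (by rintro rfl; exact hL (by simpa using hρ.symm)) (hρ ▸ hsq)
      (eventually_atTop.2 ⟨T, fun s hs => hT hs⟩)⟩
  obtain ⟨T, hT⟩ := eventually_atTop.1 <| (tendsto_iff_norm_sub_tendsto_zero.1 hsq).eventually
    (gt_mem_nhds (pow_pos (norm_pos_iff.2 hr) 2))
  have hopen : ∀ ρ : ℂ, IsOpen {s | ‖h s - ρ‖ < ‖r‖} := fun ρ =>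
    isOpen_lt (hc.sub continuous_const).norm continuous_const
  have hdisj : Disjoint {s | ‖h s - r‖ < ‖r‖} {s | ‖h s - -r‖ < ‖r‖} := by
    refine Set.disjoint_left.2 fun s h₁ h₂ => ?_
    simp only [Set.mem_ofPred_eq, sub_neg_eq_add] at h₁ h₂
    linarith [two_mul_norm_le_norm_sub_add_norm_add (h s) r]
  have hcover : Set.Ici T ⊆ {s | ‖h s - r‖ < ‖r‖} ∪ {s | ‖h s - -r‖ < ‖r‖} := fun s hs => by
    simpa [sub_neg_eq_add] using norm_sub_lt_or_norm_add_lt_of_norm_sq_sub_sq_lt (hT s hs)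
  rcases isPreconnected_Ici.subset_or_subset (hopen r) (hopen (-r)) hdisj hcover with hpos | hneg
  · exact of_subset r rfl T hpos
  · exact of_subset (-r) (neg_sq r) T (by simpa using hneg)

theorem tendsto_exp_neg_ofReal_atTop : Tendsto (fun s : ℝ => exp (-(s : ℂ))) atTop (𝓝 0) := by
  simpa [Function.comp_def, ← ofReal_neg, ← ofReal_exp] using
    (continuous_ofReal.tendsto 0).comp Real.tendsto_exp_neg_atTop_nhds_zero

end Complex

theorem tendsto_nhds_zero_of_tendsto_sq {α E : Type*} [NormedDivisionRing E] {l : Filter α}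
    {f : α → E} (h : Tendsto (fun x => f x ^ 2) l (𝓝 0)) : Tendsto f l (𝓝 0) := by
  rw [tendsto_zero_iff_norm_tendsto_zero] at h ⊢
  simpa [norm_pow] using h.sqrt

theorem Continuous.tendstoUniformlyOn_of_tendsto {ι α β γ : Type*} [TopologicalSpace α]
    [TopologicalSpace β] [UniformSpace γ] {H : α → β → γ} (hH : Continuous (Function.uncurry H))
    {l : Filter ι} {F : ι → α} {a : α} (hF : Tendsto F l (𝓝 a)) {K : Set β} (hK : IsCompact K) :
    TendstoUniformlyOn (fun i => H (F i)) (H a) l K :=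
  ContinuousMap.tendsto_iff_forall_isCompact_tendstoUniformlyOn.1
    (((ContinuousMap.curry ⟨_, hH⟩).continuous.tendsto a).comp hF) K hK

namespace BarVacuum

/-- With `Disc`, the functions `Δ` and `D` of the statement, where `k` stands for `δδ'`. -/
noncomputable def Delta (c z : ℂ) : ℂ := exp z + exp (-z) - c * (exp z - exp (-z))

noncomputable def Disc (c k z : ℂ) : ℂ := Delta c z ^ 2 - (exp z - exp (-z)) ^ 2 * k

noncomputable def quadCoeff (c k z : ℂ) : ℂ := (exp z - exp (-z)) ^ 2 / Disc c k z

noncomputable def crossCoeff (c k z : ℂ) : ℂ := 2 * (exp z - exp (-z)) * Delta c z / Disc c k z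

/-- `e^{-2z} Disc c k z` as a polynomial in `ε = e^{-z}`. -/
def scaledDisc (c k ε : ℂ) : ℂ := ((1 - c) + (1 + c) * ε ^ 2) ^ 2 - (1 - ε ^ 2) ^ 2 * k

section Identities

variable (c k : ℂ)

lemma Delta_neg (z : ℂ) : Delta c (-z) = Delta (-c) z := by
  simp only [Delta, neg_neg]; ring

lemma Disc_neg (z : ℂ) : Disc c k (-z) = Disc (-c) k z := by
  simp only [Disc, Delta_neg, neg_neg]; ring

lemma quadCoeff_neg (z : ℂ) : quadCoeff c k (-z) = quadCoeff (-c) k z := by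
  simp only [quadCoeff, Disc_neg, neg_neg]; ring

lemma crossCoeff_neg (z : ℂ) : crossCoeff c k (-z) = -crossCoeff (-c) k z := by
  simp only [crossCoeff, Disc_neg, Delta_neg, neg_neg]; ring

lemma exp_neg_mul_Delta (z : ℂ) :
    exp (-z) * Delta c z = (1 - c) + (1 + c) * exp (-z) ^ 2 := by
  rw [Delta, exp_neg]; field_simp; ring

lemma exp_neg_sq_mul_Disc (z : ℂ) : exp (-z) ^ 2 * Disc c k z = scaledDisc c k (exp (-z)) := by
  rw [Disc, scaledDisc, ← exp_neg_mul_Delta, exp_neg]; field_simp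

lemma quadCoeff_eq (z : ℂ) :
    quadCoeff c k z = (1 - exp (-z) ^ 2) ^ 2 / scaledDisc c k (exp (-z)) := by
  rw [quadCoeff, ← mul_div_mul_left _ _ (pow_ne_zero 2 (exp_ne_zero (-z))), exp_neg_sq_mul_Disc,
    exp_neg]
  field_simp

lemma crossCoeff_eq (z : ℂ) : crossCoeff c k z =
    2 * (1 - exp (-z) ^ 2) * ((1 - c) + (1 + c) * exp (-z) ^ 2) / scaledDisc c k (exp (-z)) := by
  rw [crossCoeff, ← mul_div_mul_left _ _ (pow_ne_zero 2 (exp_ne_zero (-z))), exp_neg_sq_mul_Disc,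
    ← exp_neg_mul_Delta, exp_neg]
  field_simp

lemma exp_neg_sq_div_Disc_eq (z : ℂ) :
    exp (-z) ^ 2 / Disc c k z = exp (-z) ^ 4 / scaledDisc c k (exp (-z)) := by
  rw [← exp_neg_sq_mul_Disc, ← mul_div_mul_left _ (Disc c k z) (pow_ne_zero 2 (exp_ne_zero (-z)))]
  ring

lemma scaledDisc_zero : scaledDisc c k 0 = (1 - c) ^ 2 - k := by simp [scaledDisc]

end Identities

section Limits

variable {c k : ℂ}

lemma tendsto_comp_exp_neg_atTop {R : ℂ → ℂ} (hR : ContinuousAt R 0) :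
    Tendsto (fun s : ℝ => R (exp (-(s : ℂ)))) atTop (𝓝 (R 0)) :=
  hR.tendsto.comp tendsto_exp_neg_ofReal_atTop

lemma continuousAt_div_scaledDisc {P : ℂ → ℂ} (hP : Continuous P) (hk : (1 - c) ^ 2 ≠ k) :
    ContinuousAt (fun ε => P ε / scaledDisc c k ε) 0 :=
  hP.continuousAt.div (by unfold scaledDisc; fun_prop)
    (by rw [scaledDisc_zero]; exact sub_ne_zero.2 hk)

lemma tendsto_exp_neg_sq_mul_Disc_atTop :
    Tendsto (fun s : ℝ => exp (-(s : ℂ)) ^ 2 * Disc c k s) atTop (𝓝 ((1 - c) ^ 2 - k)) := by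
  simp_rw [exp_neg_sq_mul_Disc, ← scaledDisc_zero]
  exact tendsto_comp_exp_neg_atTop (by unfold scaledDisc; fun_prop)

lemma tendsto_quadCoeff_atTop (hk : (1 - c) ^ 2 ≠ k) :
    Tendsto (fun s : ℝ => quadCoeff c k s) atTop (𝓝 (1 / ((1 - c) ^ 2 - k))) := by
  simp_rw [quadCoeff_eq]
  convert tendsto_comp_exp_neg_atTop (continuousAt_div_scaledDisc (P := fun ε => (1 - ε ^ 2) ^ 2)
    (by fun_prop) hk) using 2
  simp [scaledDisc_zero]

lemma tendsto_crossCoeff_atTop (hk : (1 - c) ^ 2 ≠ k) :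
    Tendsto (fun s : ℝ => crossCoeff c k s) atTop (𝓝 (2 * (1 - c) / ((1 - c) ^ 2 - k))) := by
  simp_rw [crossCoeff_eq]
  convert tendsto_comp_exp_neg_atTop (continuousAt_div_scaledDisc
    (P := fun ε => 2 * (1 - ε ^ 2) * ((1 - c) + (1 + c) * ε ^ 2)) (by fun_prop) hk) using 2
  simp [scaledDisc_zero]

lemma tendsto_exp_neg_sq_div_Disc_atTop (hk : (1 - c) ^ 2 ≠ k) :
    Tendsto (fun s : ℝ => exp (-(s : ℂ)) ^ 2 / Disc c k s) atTop (𝓝 0) := by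
  simp_rw [exp_neg_sq_div_Disc_eq]
  convert tendsto_comp_exp_neg_atTop (continuousAt_div_scaledDisc (P := fun ε => ε ^ 4)
    (by fun_prop) hk) using 2
  simp

lemma tendsto_quadCoeff_atBot (hk : (1 + c) ^ 2 ≠ k) :
    Tendsto (fun s : ℝ => quadCoeff c k s) atBot (𝓝 (1 / ((1 + c) ^ 2 - k))) := by
  simpa [Function.comp_def, quadCoeff_neg] using
    (tendsto_quadCoeff_atTop (c := -c) (by simpa using hk)).comp tendsto_neg_atBot_atTop

lemma tendsto_crossCoeff_atBot (hk : (1 + c) ^ 2 ≠ k) :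
    Tendsto (fun s : ℝ => crossCoeff c k s) atBot (𝓝 (-(2 * (1 + c) / ((1 + c) ^ 2 - k)))) := by
  simpa [Function.comp_def, crossCoeff_neg] using
    ((tendsto_crossCoeff_atTop (c := -c) (by simpa using hk)).comp tendsto_neg_atBot_atTop).neg

lemma tendsto_exp_sq_div_Disc_atBot (hk : (1 + c) ^ 2 ≠ k) :
    Tendsto (fun s : ℝ => exp (s : ℂ) ^ 2 / Disc c k s) atBot (𝓝 0) := by
  simpa [Function.comp_def, Disc_neg] using
    (tendsto_exp_neg_sq_div_Disc_atTop (c := -c) (by simpa using hk)).comp tendsto_neg_atBot_atTop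

variable {g : ℝ → ℂ}

lemma exists_tendsto_exp_neg_mul_atTop (hgc : Continuous g)
    (hg2 : ∀ s : ℝ, g s ^ 2 = Disc c k s) (hk : (1 - c) ^ 2 ≠ k) :
    ∃ w, w ^ 2 = (1 - c) ^ 2 - k ∧ Tendsto (fun s : ℝ => exp (-(s : ℂ)) * g s) atTop (𝓝 w) :=
  ((continuous_exp.comp continuous_ofReal.neg).mul hgc).exists_tendsto_atTop_of_tendsto_sq
    (sub_ne_zero.2 hk) (by simpa [mul_pow, hg2] using tendsto_exp_neg_sq_mul_Disc_atTop)

lemma tendsto_exp_mul_div_atTop (a : ℂ) {w : ℂ} (hw0 : w ≠ 0)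
    (hw : Tendsto (fun s : ℝ => exp (-(s : ℂ)) * g s) atTop (𝓝 w)) :
    Tendsto (fun s : ℝ => exp (s : ℂ) * (a / g s)) atTop (𝓝 (a / w)) := by
  refine ((tendsto_const_nhds (x := a)).div hw hw0).congr fun s => ?_
  change a / (exp (-(s : ℂ)) * g s) = _
  rw [exp_neg]
  field_simp

lemma tendsto_exp_mul_div_atBot (a : ℂ) (hg2 : ∀ s : ℝ, g s ^ 2 = Disc c k s)
    (hk : (1 + c) ^ 2 ≠ k) : Tendsto (fun s : ℝ => exp (s : ℂ) * (a / g s)) atBot (𝓝 0) := by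
  refine tendsto_nhds_zero_of_tendsto_sq ?_
  have h := (tendsto_exp_sq_div_Disc_atBot hk).const_mul (a ^ 2)
  rw [mul_zero] at h
  refine h.congr fun s => ?_
  rw [mul_pow, div_pow, hg2]; ring

end Limits

/-- The shape of `e^{t/2} G(t,·,·)`, with the parameters `q` moving with `t`. -/
noncomputable def gaussian (κ δ δ' : ℂ) (q : ℂ × ℂ × ℂ) (p : ℂ × ℂ) : ℂ :=
  q.1 * exp (κ * (q.2.1 * (δ' * p.1 ^ 2 + δ * p.2 ^ 2) + q.2.2 * (p.1 * p.2)))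

variable (κ δ δ' : ℂ)

lemma continuous_gaussian : Continuous (Function.uncurry (gaussian κ δ δ')) := by
  unfold gaussian Function.uncurry; fun_prop

lemma mul_exp_eq_gaussian (c a z u v : ℂ) :
    a * exp (κ * ((exp z - exp (-z)) / Disc c (δ * δ') z) *
      ((exp z - exp (-z)) * (δ' * u ^ 2 + δ * v ^ 2) + 2 * Delta c z * u * v)) =
    gaussian κ δ δ' (a, quadCoeff c (δ * δ') z, crossCoeff c (δ * δ') z) (u, v) := by
  unfold gaussian quadCoeff crossCoeff; ring_nf

lemma gaussian_div_eq (a b L : ℂ) (p : ℂ × ℂ) : gaussian κ δ δ' (a, 1 / L, 2 * b / L) p =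
    a * exp (κ * (δ' * p.1 ^ 2 + 2 * b * p.1 * p.2 + δ * p.2 ^ 2) / L) := by
  unfold gaussian; ring_nf

lemma gaussian_zero_fst (b e : ℂ) : gaussian κ δ δ' (0, b, e) = fun _ => 0 := by
  funext p; simp [gaussian]

end BarVacuum

open BarVacuum in
theorem statement5_general (ℏ δ δ' c : ℂ)
    (h1 : (1 + c) ^ 2 ≠ δ * δ') (h2 : (1 - c) ^ 2 ≠ δ * δ')
    (Δ D : ℂ → ℂ)
    (hΔ : ∀ t, Δ t = exp t + exp (-t) - c * (exp t - exp (-t)))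
    (hD : ∀ t, D t = (Δ t) ^ 2 - (exp t - exp (-t)) ^ 2 * (δ * δ'))
    (g : ℝ → ℂ) (hgc : Continuous g) (hg2 : ∀ s : ℝ, (g s) ^ 2 = D s)
    (G : ℝ → ℂ → ℂ → ℂ)
    (hG : ∀ (t : ℝ) (u v : ℂ), G t u v =
      2 / g (t / 2) * exp ((1 / (Complex.I * ℏ)) *
        ((exp ((t : ℂ) / 2) - exp (-(t : ℂ) / 2)) / D ((t : ℂ) / 2)) *
        ((exp ((t : ℂ) / 2) - exp (-(t : ℂ) / 2)) * (δ' * u ^ 2 + δ * v ^ 2)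
          + 2 * Δ ((t : ℂ) / 2) * u * v))) :
    ∃ wbar : ℂ,
      Tendsto (fun s : ℝ => exp (-(s : ℂ)) * g s) atTop (nhds wbar) ∧
      wbar ^ 2 = (1 - c) ^ 2 - δ * δ' ∧
      (∀ Q : Set (ℂ × ℂ), IsCompact Q →
        TendstoUniformlyOn
          (fun (t : ℝ) (p : ℂ × ℂ) => exp ((t : ℂ) / 2) * G t p.1 p.2)
          (fun p => 2 / wbar * exp ((1 / (Complex.I * ℏ)) *
            (δ' * p.1 ^ 2 + 2 * (1 - c) * p.1 * p.2 + δ * p.2 ^ 2) /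
              ((1 - c) ^ 2 - δ * δ')))
          atTop Q ∧
        TendstoUniformlyOn
          (fun (t : ℝ) (p : ℂ × ℂ) => exp ((t : ℂ) / 2) * G t p.1 p.2)
          (fun _ => 0) atBot Q) := by
  obtain rfl : Δ = Delta c := funext hΔ
  obtain rfl : D = Disc c (δ * δ') := funext hD
  have hfamily : (fun (t : ℝ) (p : ℂ × ℂ) => exp ((t : ℂ) / 2) * G t p.1 p.2) = fun t =>
      gaussian (1 / (I * ℏ)) δ δ' (exp ((t / 2 : ℝ) : ℂ) * (2 / g (t / 2)),
        quadCoeff c (δ * δ') (t / 2 : ℝ), crossCoeff c (δ * δ') (t / 2 : ℝ)) := by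
    funext t p
    rw [hG, ← mul_assoc, neg_div, mul_exp_eq_gaussian]
    push_cast; rfl
  obtain ⟨w, hw2, hw⟩ := exists_tendsto_exp_neg_mul_atTop hgc hg2 h2
  have hw0 : w ≠ 0 := by rintro rfl; exact h2 (sub_eq_zero.1 (by simpa using hw2.symm))
  refine ⟨w, hw, hw2, fun Q hQ => ⟨?_, ?_⟩⟩
  · simp_rw [hfamily, ← gaussian_div_eq]
    exact (continuous_gaussian _ δ δ').tendstoUniformlyOn_of_tendsto
      (((tendsto_exp_mul_div_atTop 2 hw0 hw).prodMk_nhds ((tendsto_quadCoeff_atTop h2).prodMk_nhds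
        (tendsto_crossCoeff_atTop h2))).comp (tendsto_id.atTop_div_const two_pos)) hQ
  · rw [hfamily, ← gaussian_zero_fst (1 / (I * ℏ)) δ δ' (1 / ((1 + c) ^ 2 - δ * δ'))
      (-(2 * (1 + c) / ((1 + c) ^ 2 - δ * δ')))]
    exact (continuous_gaussian _ δ δ').tendstoUniformlyOn_of_tendsto
      (((tendsto_exp_mul_div_atBot 2 hg2 h1).prodMk_nhds ((tendsto_quadCoeff_atBot h1).prodMk_nhds
        (tendsto_crossCoeff_atBot h1))).comp (tendsto_id.atBot_div_const two_pos)) hQ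

/-- With `K = [[δ,c],[c,δ']]`, `(1±c)² ≠ δδ'`, `D` nonvanishing on ℝ, `g` the continuous
square root of `D` on ℝ with `g 0 = 2`, and `G(t,·,·)` the `K`-ordered expression of
`e_∗^{t(1/(iℏ))u∘v}`: the limit `w̄ = lim_{s→+∞} e^{−s} g(s)` exists,
`w̄² = (1−c)² − δδ'`, and, uniformly on compact subsets of ℂ², `e^{t/2}G(t,u,v)` (the
`K`-ordered expression of `e_∗^{t(1/(iℏ))v∗u}`) converges as `t → +∞` to the bar-vacuum
`(2/w̄)·exp((1/(iℏ))(δ'u² + 2(1−c)uv + δv²)/((1−c)² − δδ'))`, and to `0` as `t → −∞`. -/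
theorem statement5 (ℏ δ δ' c : ℂ) (hℏ : ℏ ≠ 0)
    (h1 : (1 + c) ^ 2 ≠ δ * δ') (h2 : (1 - c) ^ 2 ≠ δ * δ')
    (Δ D : ℂ → ℂ)
    (hΔ : ∀ t, Δ t = exp t + exp (-t) - c * (exp t - exp (-t)))
    (hD : ∀ t, D t = (Δ t) ^ 2 - (exp t - exp (-t)) ^ 2 * (δ * δ'))
    (hDR : ∀ s : ℝ, D s ≠ 0)
    (g : ℝ → ℂ) (hgc : Continuous g) (hg2 : ∀ s : ℝ, (g s) ^ 2 = D s) (hg0 : g 0 = 2)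
    (G : ℝ → ℂ → ℂ → ℂ)
    (hG : ∀ (t : ℝ) (u v : ℂ), G t u v =
      2 / g (t / 2) * exp ((1 / (Complex.I * ℏ)) *
        ((exp ((t : ℂ) / 2) - exp (-(t : ℂ) / 2)) / D ((t : ℂ) / 2)) *
        ((exp ((t : ℂ) / 2) - exp (-(t : ℂ) / 2)) * (δ' * u ^ 2 + δ * v ^ 2)
          + 2 * Δ ((t : ℂ) / 2) * u * v))) :
    ∃ wbar : ℂ,
      Tendsto (fun s : ℝ => exp (-(s : ℂ)) * g s) atTop (nhds wbar) ∧
      wbar ^ 2 = (1 - c) ^ 2 - δ * δ' ∧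
      (∀ Q : Set (ℂ × ℂ), IsCompact Q →
        TendstoUniformlyOn
          (fun (t : ℝ) (p : ℂ × ℂ) => exp ((t : ℂ) / 2) * G t p.1 p.2)
          (fun p => 2 / wbar * exp ((1 / (Complex.I * ℏ)) *
            (δ' * p.1 ^ 2 + 2 * (1 - c) * p.1 * p.2 + δ * p.2 ^ 2) /
              ((1 - c) ^ 2 - δ * δ')))
          atTop Q ∧
        TendstoUniformlyOn
          (fun (t : ℝ) (p : ℂ × ℂ) => exp ((t : ℂ) / 2) * G t p.1 p.2)
          (fun _ => 0) atBot Q) :=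
  statement5_general ℏ δ δ' c h1 h2 Δ D hΔ hD g hgc hg2 G hG
end

section
/- Let A be an associative unital algebra over ℂ, ℏ a nonzero complex number, and u, v, ϖ ∈ A elements satisfying u∗v − v∗u = −iℏ·1, v∗ϖ = 0, ϖ∗u = 0, and ϖ∗ϖ = ϖ. Then for all natural numbers p, q, r, s: (u^p ∗ ϖ ∗ v^q) ∗ (u^r ∗ ϖ ∗ v^s) = 0 if q ≠ r, and (u^p ∗ ϖ ∗ v^q) ∗ (u^q ∗ ϖ ∗ v^s) = q!·(iℏ)^q · (u^p ∗ ϖ ∗ v^s). In particular the normalized elements E_{p,q} = (p! q! (iℏ)^{p+q})^{−1/2} u^p ∗ ϖ ∗ v^q satisfy the matrix-unit law E_{p,q} ∗ E_{r,s} = δ_{q,r} E_{p,s}. -/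
/-!
Pushing the `v`s of `ϖ v^q u^r ϖ` to the right with `v u^(n+1) = u^(n+1) v + (n+1) iℏ u^n`,
every term ending in `v ϖ` vanishes, and each step lowers `q` and `r` together; so the sandwich
is killed by `ϖ u = 0` or `v ϖ = 0` unless `q = r`, and otherwise equals `q! (iℏ)^q ϖ`.
The product `(u^p ϖ v^q)(u^r ϖ v^s)` is `u^p (ϖ v^q u^r ϖ) v^s`, and dividing by square roots
of these scalars turns the resulting law into that of matrix units.
-/

open scoped Nat

section WeylVacuum

variable {R A : Type*} [CommSemiring R] [Semiring A] [Algebra R A] {u v ϖ : A} {c : R}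

theorem mul_pow_succ_of_mul_eq_add_smul_one (hvu : v * u = u * v + c • (1 : A)) (n : ℕ) :
    v * u ^ (n + 1) = u ^ (n + 1) * v + ((n + 1 : ℕ) * c) • u ^ n := by
  induction n with
  | zero => simpa using hvu
  | succ n ih =>
    calc v * u ^ (n + 2) = (v * u ^ (n + 1)) * u := by rw [pow_succ _ (n + 1), mul_assoc]
      _ = u ^ (n + 1) * (v * u) + ((n + 1 : ℕ) * c) • u ^ (n + 1) := by
        rw [ih, add_mul, mul_assoc, smul_mul_assoc, ← pow_succ]
      _ = u ^ (n + 2) * v + ((n + 2 : ℕ) * c) • u ^ (n + 1) := by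
        rw [hvu, mul_add, ← mul_assoc, ← pow_succ, mul_smul_comm, mul_one, add_assoc,
          ← add_smul]
        push_cast
        ring_nf

theorem vacuum_mul_pow_mul_pow_mul_vacuum (hvu : v * u = u * v + c • (1 : A))
    (hv : v * ϖ = 0) (hu : ϖ * u = 0) (hidem : ϖ * ϖ = ϖ) (q r : ℕ) :
    ϖ * v ^ q * (u ^ r * ϖ) = (if q = r then (q ! * c ^ q : R) else 0) • ϖ := by
  induction q generalizing r with
  | zero =>
    cases r with
    | zero => simp [hidem]
    | succ r => rw [pow_zero, mul_one, pow_succ', mul_assoc u, ← mul_assoc ϖ, hu, zero_mul,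
        if_neg r.succ_ne_zero.symm, zero_smul]
  | succ q ih =>
    cases r with
    | zero => simp [pow_succ, mul_assoc, hv]
    | succ r =>
      calc ϖ * v ^ (q + 1) * (u ^ (r + 1) * ϖ) = ϖ * v ^ q * ((v * u ^ (r + 1)) * ϖ) := by
            simp only [pow_succ, mul_assoc]
        _ = ((r + 1 : ℕ) * c) • (ϖ * v ^ q * (u ^ r * ϖ)) := by
            rw [mul_pow_succ_of_mul_eq_add_smul_one hvu, add_mul, mul_assoc _ v, hv, mul_zero,
              zero_add, smul_mul_assoc, mul_smul_comm]
        _ = (if q + 1 = r + 1 then ((q + 1)! * c ^ (q + 1) : R) else 0) • ϖ := by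
            rw [ih, smul_smul]
            by_cases hqr : q = r
            · subst hqr
              simp only [if_true, Nat.factorial_succ]
              push_cast
              ring_nf
            · simp [hqr]

theorem pow_mul_vacuum_mul_pow_mul_pow_mul_vacuum_mul_pow (hvu : v * u = u * v + c • (1 : A))
    (hv : v * ϖ = 0) (hu : ϖ * u = 0) (hidem : ϖ * ϖ = ϖ) (p q r s : ℕ) :
    (u ^ p * ϖ * v ^ q) * (u ^ r * ϖ * v ^ s) =
      (if q = r then (q ! * c ^ q : R) else 0) • (u ^ p * ϖ * v ^ s) := by
  calc (u ^ p * ϖ * v ^ q) * (u ^ r * ϖ * v ^ s) = u ^ p * (ϖ * v ^ q * (u ^ r * ϖ)) * v ^ s := by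
        simp only [mul_assoc]
    _ = _ := by
        rw [vacuum_mul_pow_mul_pow_mul_vacuum hvu hv hu hidem, mul_smul_comm, smul_mul_assoc,
          mul_assoc]

end WeylVacuum

theorem normalized_mul_normalized_eq_ite {ι K A : Type*} [DecidableEq ι] [Field K]
    [Semiring A] [Algebra K A] (e E : ι → ι → A) (w n : ι → K)
    (he : ∀ p q r s, e p q * e r s = (if q = r then w q else 0) • e p s)
    (hn : ∀ k, n k ^ 2 = w k) (hn0 : ∀ k, n k ≠ 0)
    (hE : ∀ p q, E p q = (n p * n q)⁻¹ • e p q) (p q r s : ι) :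
    E p q * E r s = if q = r then E p s else 0 := by
  rw [hE, hE, smul_mul_smul, he]
  split_ifs with hqr
  · subst hqr
    rw [hE, smul_smul, ← hn]
    congr 1
    have := hn0 p; have := hn0 q; have := hn0 s
    field_simp
  · rw [zero_smul, smul_zero]

/-- In any associative unital ℂ-algebra with `u∗v − v∗u = −iℏ·1` (`ℏ ≠ 0`) and an abstract
vacuum `ϖ` (idempotent, `v∗ϖ = 0`, `ϖ∗u = 0`):
`(u^p∗ϖ∗v^q)∗(u^r∗ϖ∗v^s) = 0` if `q ≠ r`, and
`(u^p∗ϖ∗v^q)∗(u^q∗ϖ∗v^s) = q!(iℏ)^q·(u^p∗ϖ∗v^s)`; in particular, for any choice of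
square roots `n_k` with `n_k² = k!(iℏ)^k`, the normalized elements
`E_{p,q} = (n_p n_q)⁻¹ u^p∗ϖ∗v^q` satisfy the matrix-unit law
`E_{p,q}∗E_{r,s} = δ_{q,r} E_{p,s}`. -/
theorem statement12 (A : Type*) [Ring A] [Algebra ℂ A] (ℏ : ℂ) (hℏ : ℏ ≠ 0)
    (u v ϖ : A) (weyl : u * v - v * u = -(Complex.I * ℏ) • (1 : A))
    (hv : v * ϖ = 0) (hu : ϖ * u = 0) (hidem : ϖ * ϖ = ϖ)
    (nrm : ℕ → ℂ) (hnrm : ∀ k : ℕ, (nrm k) ^ 2 = (k.factorial : ℂ) * (Complex.I * ℏ) ^ k)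
    (E : ℕ → ℕ → A)
    (hE : ∀ p q : ℕ, E p q = ((nrm p * nrm q)⁻¹ : ℂ) • (u ^ p * ϖ * v ^ q)) :
    (∀ p q r s : ℕ, q ≠ r → (u ^ p * ϖ * v ^ q) * (u ^ r * ϖ * v ^ s) = 0) ∧
    (∀ p q s : ℕ, (u ^ p * ϖ * v ^ q) * (u ^ q * ϖ * v ^ s) =
      ((q.factorial : ℂ) * (Complex.I * ℏ) ^ q) • (u ^ p * ϖ * v ^ s)) ∧
    (∀ p q r s : ℕ, E p q * E r s = if q = r then E p s else 0) := by
  have hvu : v * u = u * v + (Complex.I * ℏ) • (1 : A) := by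
    rw [← sub_eq_iff_eq_add', ← neg_sub, weyl, neg_smul, neg_neg]
  have hprod := pow_mul_vacuum_mul_pow_mul_pow_mul_vacuum_mul_pow hvu hv hu hidem
  have hnrm0 (k : ℕ) : nrm k ≠ 0 := by
    refine ne_zero_pow two_ne_zero ?_
    rw [hnrm]
    exact mul_ne_zero (Nat.cast_ne_zero.mpr k.factorial_ne_zero)
      (pow_ne_zero k (mul_ne_zero Complex.I_ne_zero hℏ))
  refine ⟨fun p q r s hqr => ?_, fun p q s => ?_, ?_⟩
  · rw [hprod, if_neg hqr, zero_smul]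
  · rw [hprod, if_pos rfl]
  · exact normalized_mul_normalized_eq_ite _ E _ nrm hprod hnrm hnrm0 hE
end

section
/- Let A be an associative unital algebra over ℂ, ℏ a nonzero complex number, and u, v, ϖ, R ∈ A elements satisfying u∗v − v∗u = −iℏ·1, v∗ϖ = 0, and R∗(v∗u) = (v∗u)∗R = 1 (R is a two-sided inverse of v∗u). Then for every natural number n, u^n ∗ ϖ = n!·(iℏ)^n · (u∗R)^n ∗ ϖ; equivalently, (v°)^n ∗ ϖ = (1/(n!)) ((1/(iℏ))u)^n ∗ ϖ where v° = u∗R is the right inverse of v. -/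
/-!
Writing `c = iℏ`, the Weyl relation reads `v * u = u * v + c`, so `v` acts on the ladder
`uⁿϖ` as a lowering operator: `v * (uⁿ⁺¹ϖ) = (n + 1) c • uⁿϖ`, because `v ϖ = 0`.
Inserting `1 = R * (v * u)` gives `uⁿ⁺¹ϖ = u R (v u) uⁿϖ = (n + 1) c • (u R) uⁿϖ`, and the
formula follows by induction on `n`.
-/

section Ladder

variable {K A : Type*} [CommRing K] [Ring A] [Algebra K A] {u v ϖ : A} {c : K}

theorem mul_pow_succ_mul_eq_smul_pow_mul (hvu : v * u = u * v + c • 1) (hv : v * ϖ = 0)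
    (n : ℕ) : v * (u ^ (n + 1) * ϖ) = ((n + 1 : K) * c) • (u ^ n * ϖ) := by
  induction n with
  | zero =>
    rw [zero_add, pow_one, pow_zero, one_mul, ← mul_assoc, hvu, add_mul, mul_assoc, hv,
      mul_zero, zero_add, smul_mul_assoc, one_mul, Nat.cast_zero, zero_add, one_mul]
  | succ n ih =>
    calc v * (u ^ (n + 2) * ϖ) = (v * u) * (u ^ (n + 1) * ϖ) := by
          rw [pow_succ' u (n + 1), mul_assoc, mul_assoc]
      _ = u * (v * (u ^ (n + 1) * ϖ)) + c • (u ^ (n + 1) * ϖ) := by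
          rw [hvu, add_mul, mul_assoc, smul_mul_assoc, one_mul]
      _ = ((n + 1 : K) * c + c) • (u ^ (n + 1) * ϖ) := by
          rw [ih, mul_smul_comm, ← mul_assoc, ← pow_succ', ← add_smul]
      _ = (((n + 1 : ℕ) + 1 : K) * c) • (u ^ (n + 1) * ϖ) := by
          push_cast; ring_nf

theorem pow_succ_mul_eq_smul_mul_inv_mul (hvu : v * u = u * v + c • 1) (hv : v * ϖ = 0)
    {R : A} (hR : R * (v * u) = 1) (n : ℕ) :
    u ^ (n + 1) * ϖ = ((n + 1 : K) * c) • ((u * R) * (u ^ n * ϖ)) := by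
  calc u ^ (n + 1) * ϖ = u * ((R * (v * u)) * (u ^ n * ϖ)) := by
        rw [hR, one_mul, ← mul_assoc, ← pow_succ']
    _ = u * R * (v * (u ^ (n + 1) * ϖ)) := by
        rw [pow_succ' u n]; simp only [mul_assoc]
    _ = ((n + 1 : K) * c) • ((u * R) * (u ^ n * ϖ)) := by
        rw [mul_pow_succ_mul_eq_smul_pow_mul hvu hv, mul_smul_comm]

theorem pow_mul_eq_factorial_smul_mul_inv_pow_mul (hvu : v * u = u * v + c • 1)
    (hv : v * ϖ = 0) {R : A} (hR : R * (v * u) = 1) (n : ℕ) :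
    u ^ n * ϖ = ((n.factorial : K) * c ^ n) • ((u * R) ^ n * ϖ) := by
  induction n with
  | zero => simp
  | succ n ih =>
    rw [pow_succ_mul_eq_smul_mul_inv_mul hvu hv hR, ih, mul_smul_comm, smul_smul,
      pow_succ' (u * R), mul_assoc (u * R), Nat.factorial_succ]
    congr 1
    push_cast
    ring

end Ladder

theorem statement15_general (A : Type*) [Ring A] [Algebra ℂ A] (ℏ : ℂ)
    (u v ϖ R : A) (weyl : u * v - v * u = -(Complex.I * ℏ) • (1 : A))
    (hv : v * ϖ = 0) (hR1 : R * (v * u) = 1) :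
    ∀ n : ℕ,
      u ^ n * ϖ = ((n.factorial : ℂ) * (Complex.I * ℏ) ^ n) • ((u * R) ^ n * ϖ) := by
  have hvu : v * u = u * v + (Complex.I * ℏ) • (1 : A) := by
    rw [← sub_eq_iff_eq_add', ← neg_sub, weyl, neg_smul, neg_neg]
  exact pow_mul_eq_factorial_smul_mul_inv_pow_mul hvu hv hR1

/-- In any associative unital ℂ-algebra with `u∗v − v∗u = −iℏ·1` (`ℏ ≠ 0`), `ϖ` with
`v∗ϖ = 0`, and `R` a two-sided inverse of `v∗u`: for every `n`,
`u^n ∗ ϖ = n!(iℏ)^n·(u∗R)^n ∗ ϖ`; equivalently `(v°)^n∗ϖ = (1/n!)((1/(iℏ))u)^n∗ϖ`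
for the right inverse `v° = u∗(v∗u)⁻¹` of `v`. -/
theorem statement15 (A : Type*) [Ring A] [Algebra ℂ A] (ℏ : ℂ) (hℏ : ℏ ≠ 0)
    (u v ϖ R : A) (weyl : u * v - v * u = -(Complex.I * ℏ) • (1 : A))
    (hv : v * ϖ = 0) (hR1 : R * (v * u) = 1) (hR2 : (v * u) * R = 1) :
    ∀ n : ℕ,
      u ^ n * ϖ = ((n.factorial : ℂ) * (Complex.I * ℏ) ^ n) • ((u * R) ^ n * ϖ) :=
  statement15_general A ℏ u v ϖ R weyl hv hR1
end

section
/- Let a₁, a₂, γ ∈ ℂ and let s ∈ ℂ satisfy s² = a₁a₂. Define η(t) = (γ − s/2)e^{t} + (γ + s/2)e^{−t} − 2γ, and on any open subset U of ℂ (or open real interval) on which η has no zeros set δ₁(t) = a₁ e^{−t}/η(t), δ₂(t) = a₂ e^{t}/η(t), and c(t) = η′(t)/η(t). Then the triple (δ₁, δ₂, c) solves the co-moving expression-parameter system: dδ₁/dt = −δ₁(c+1), dδ₂/dt = −δ₂(c−1), and dc/dt = −½(δ₁δ₂ + c² − 1) on U. -/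
open Complex

/-!
With `A = γ - s/2`, `B = γ + s/2` the function `η = A eᵗ + B e⁻ᵗ - 2γ` satisfies `η'' = η + 2γ`
and `η'² = (η + 2γ)² - 4AB`, where `4AB = 4γ² - s²`. The equations for `δ₁, δ₂` are the quotient
rule for `a e^{∓t} / η`; the Riccati equation for `c = η'/η` follows from the two identities,
because `δ₁ δ₂ = s² / η²`.
-/

theorem HasDerivAt.div_of_hasDerivAt_const_mul_self {𝕜 : Type*} [NontriviallyNormedField 𝕜]
    {f g : 𝕜 → 𝕜} {μ g' x : 𝕜} (hf : HasDerivAt f (μ * f x) x) (hg : HasDerivAt g g' x)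
    (hx : g x ≠ 0) :
    HasDerivAt (fun y => f y / g y) (-(f x / g x) * (g' / g x - μ)) x :=
  (hf.div hg hx).congr_deriv (by field_simp; ring)

noncomputable def expComb (A B C t : ℂ) : ℂ := A * exp t + B * exp (-t) + C

section expComb

variable (A B C : ℂ)

theorem hasDerivAt_expComb (t : ℂ) :
    HasDerivAt (expComb A B C) (expComb A (-B) 0 t) t := by
  have h := (((hasDerivAt_exp t).const_mul A).add
    (((hasDerivAt_neg t).cexp).const_mul B)).add_const C
  exact h.congr_deriv (by simp only [expComb]; ring)

theorem deriv_expComb : deriv (expComb A B C) = expComb A (-B) 0 :=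
  funext fun t => (hasDerivAt_expComb A B C t).deriv

theorem expComb_neg_sq (t : ℂ) :
    expComb A (-B) 0 t ^ 2 = (expComb A B C t - C) ^ 2 - 4 * A * B := by
  have h : exp t * exp (-t) = 1 := by rw [← exp_add, add_neg_cancel, exp_zero]
  simp only [expComb]
  linear_combination (-4 * A * B) * h

theorem hasDerivAt_logDeriv_expComb {t : ℂ} (ht : expComb A B C t ≠ 0) :
    HasDerivAt (logDeriv (expComb A B C))
      (-(1 / 2) * ((C ^ 2 - 4 * A * B) / expComb A B C t ^ 2
        + logDeriv (expComb A B C) t ^ 2 - 1)) t := by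
  have hlog : logDeriv (expComb A B C) = fun t => expComb A (-B) 0 t / expComb A B C t := by
    rw [logDeriv, deriv_expComb]; rfl
  have hη'' : expComb A (-(-B)) 0 t = expComb A B C t - C := by
    simp only [expComb, neg_neg]; ring
  rw [hlog]
  refine ((hasDerivAt_expComb A (-B) 0 t).div (hasDerivAt_expComb A B C t) ht).congr_deriv ?_
  rw [hη'']
  field_simp
  linear_combination -expComb_neg_sq A B C t

end expComb

theorem statement19_general (a₁ a₂ γ s : ℂ) (hs : s ^ 2 = a₁ * a₂)
    (η : ℂ → ℂ)
    (hη : ∀ t, η t = (γ - s / 2) * exp t + (γ + s / 2) * exp (-t) - 2 * γ)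
    (U : Set ℂ) (hηne : ∀ t ∈ U, η t ≠ 0)
    (δ₁ δ₂ c : ℂ → ℂ)
    (hδ₁ : ∀ t, δ₁ t = a₁ * exp (-t) / η t)
    (hδ₂ : ∀ t, δ₂ t = a₂ * exp t / η t)
    (hc : ∀ t, c t = deriv η t / η t) :
    ∀ t ∈ U,
      HasDerivAt δ₁ (-(δ₁ t) * (c t + 1)) t ∧
      HasDerivAt δ₂ (-(δ₂ t) * (c t - 1)) t ∧
      HasDerivAt c (-(1 / 2) * (δ₁ t * δ₂ t + (c t) ^ 2 - 1)) t := by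
  intro t ht
  obtain rfl : η = expComb (γ - s / 2) (γ + s / 2) (-2 * γ) :=
    funext fun t => by rw [hη, expComb]; ring
  obtain rfl : c = logDeriv (expComb (γ - s / 2) (γ + s / 2) (-2 * γ)) :=
    funext fun t => by rw [hc, logDeriv_apply]
  obtain rfl := funext hδ₁
  obtain rfl := funext hδ₂
  have hηderiv := hasDerivAt_expComb (γ - s / 2) (γ + s / 2) (-2 * γ) t
  have hηt := hηne t ht
  refine ⟨?_, ?_, ?_⟩
  · have hnum : HasDerivAt (fun t => a₁ * exp (-t)) (-1 * (a₁ * exp (-t))) t :=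
      ((hasDerivAt_neg t).cexp.const_mul a₁).congr_deriv (by ring)
    refine (hnum.div_of_hasDerivAt_const_mul_self hηderiv hηt).congr_deriv ?_
    rw [logDeriv_apply, hηderiv.deriv]; ring
  · have hnum : HasDerivAt (fun t => a₂ * exp t) (1 * (a₂ * exp t)) t :=
      ((hasDerivAt_exp t).const_mul a₂).congr_deriv (one_mul _).symm
    refine (hnum.div_of_hasDerivAt_const_mul_self hηderiv hηt).congr_deriv ?_
    rw [logDeriv_apply, hηderiv.deriv]
  · refine (hasDerivAt_logDeriv_expComb _ _ _ hηt).congr_deriv ?_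
    have hprod : exp (-t) * exp t = 1 := by rw [← exp_add, neg_add_cancel, exp_zero]
    beta_reduce
    generalize expComb _ _ _ t = E at hηt ⊢
    field_simp
    linear_combination (-4) * hs + 4 * a₁ * a₂ * hprod

/-- For `a₁, a₂, γ ∈ ℂ` and `s` with `s² = a₁a₂`, set
`η(t) = (γ − s/2)e^t + (γ + s/2)e^{−t} − 2γ`, and on an open set `U` where `η ≠ 0` put
`δ₁(t) = a₁e^{−t}/η(t)`, `δ₂(t) = a₂e^t/η(t)`, `c(t) = η'(t)/η(t)`.  Then `(δ₁, δ₂, c)`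
solves the co-moving expression-parameter system
`δ₁' = −δ₁(c+1)`, `δ₂' = −δ₂(c−1)`, `c' = −½(δ₁δ₂ + c² − 1)` on `U`. -/
theorem statement19 (a₁ a₂ γ s : ℂ) (hs : s ^ 2 = a₁ * a₂)
    (η : ℂ → ℂ)
    (hη : ∀ t, η t = (γ - s / 2) * exp t + (γ + s / 2) * exp (-t) - 2 * γ)
    (U : Set ℂ) (hU : IsOpen U) (hηne : ∀ t ∈ U, η t ≠ 0)
    (δ₁ δ₂ c : ℂ → ℂ)
    (hδ₁ : ∀ t, δ₁ t = a₁ * exp (-t) / η t)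
    (hδ₂ : ∀ t, δ₂ t = a₂ * exp t / η t)
    (hc : ∀ t, c t = deriv η t / η t) :
    ∀ t ∈ U,
      HasDerivAt δ₁ (-(δ₁ t) * (c t + 1)) t ∧
      HasDerivAt δ₂ (-(δ₂ t) * (c t - 1)) t ∧
      HasDerivAt c (-(1 / 2) * (δ₁ t * δ₂ t + (c t) ^ 2 - 1)) t :=
  statement19_general a₁ a₂ γ s hs η hη U hηne δ₁ δ₂ c hδ₁ hδ₂ hc
end
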